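/- arXiv:2306.14665 — 2 statements merged into one kernel-verified Lean document; each statement's English description precedes it below -/
import Mathlib

section
/- Let F be real-valued and C^∞ on a neighborhood of the annulus A = {1/2 ≤ |ξ| ≤ 2} in ℝⁿ, with |∇F(ξ)| ≥ M > 0 on A and |∂^α F(ξ)| ≤ C_α M on A for all 2 ≤ |α| ≤ N+1. Define G_ℓ = ∂_{ξ_ℓ}F/|∇F|². Then for every multi-index α with |α| ≤ N there exists a constant C (depending only on n, N, and the C_α) such that |∂^α G_ℓ(ξ)| ≤ C M^{-1} for all ξ ∈ A and ℓ = 1,…,n. -/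
/-!
The field `G = ∂_v F / |∇F|²` is homogeneous of degree `-1` in `F`, so replacing `F` by
`F / |∇F(ξ)|` and using `|∇F(ξ)| ≥ M` reduces the claim to a scale-free one: if `|∇F(ξ)| ≥ 1` and
the derivatives of `F` of orders `1, …, N + 1` at `ξ` are bounded by `A`, then the derivatives of
`G` of order `≤ N` at `ξ` are bounded by a constant depending on `N` and `A` only. For that, write
`G = ∂_v F · (1 / ⟪∇F, ∇F⟫)`: the Leibniz rule bounds the derivatives of `⟪∇F, ∇F⟫`, Faà di Bruno's
bound for `y ↦ 1 / y` on `y > 1/2` (where `⟪∇F, ∇F⟫` stays near `ξ`) those of the reciprocal, and a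
last Leibniz rule those of the product.
-/

open MeasureTheory Real Set

abbrev Euc (n : ℕ) := EuclideanSpace ℝ (Fin n)

open Nat InnerProductSpace

theorem sum_choose_mul_mul_le {a b : ℕ → ℝ} {A B : ℝ} (n : ℕ) (ha₀ : ∀ i, 0 ≤ a i)
    (hb₀ : ∀ i, 0 ≤ b i) (ha : ∀ i ≤ n, a i ≤ A) (hb : ∀ i ≤ n, b i ≤ B) :
    ∑ i ∈ Finset.range (n + 1), (n.choose i : ℝ) * a i * b (n - i) ≤ 2 ^ n * (A * B) := by
  calc ∑ i ∈ Finset.range (n + 1), (n.choose i : ℝ) * a i * b (n - i)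
      ≤ ∑ i ∈ Finset.range (n + 1), (n.choose i : ℝ) * A * B := by
        refine Finset.sum_le_sum fun i hi => ?_
        have hi : i ≤ n := Nat.lt_succ_iff.mp (Finset.mem_range.mp hi)
        rw [mul_assoc, mul_assoc]
        gcongr
        exacts [hb₀ _, (ha₀ i).trans (ha i hi), ha i hi, hb _ (Nat.sub_le n i)]
    _ = 2 ^ n * (A * B) := by
        simp_rw [mul_assoc, ← Finset.sum_mul]
        congr 1
        exact_mod_cast Nat.sum_range_choose n

theorem iteratedFDeriv_const_smul_field {𝕜 E F : Type*} [NontriviallyNormedField 𝕜]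
    [NormedAddCommGroup E] [NormedSpace 𝕜 E] [NormedAddCommGroup F] [NormedSpace 𝕜 F]
    (c : 𝕜) (f : E → F) (n : ℕ) :
    iteratedFDeriv 𝕜 n (c • f) = c • iteratedFDeriv 𝕜 n f := by
  induction n with
  | zero => ext; simp
  | succ n ih =>
    rw [iteratedFDeriv_succ_eq_comp_left, iteratedFDeriv_succ_eq_comp_left, ih,
      fderiv_const_smul_field (f := iteratedFDeriv 𝕜 n f)]
    ext; simp

theorem ContinuousLinearMap.norm_iteratedFDeriv_le_of_bilinear_of_forall_le
    {𝕜 E F G H : Type*} [NontriviallyNormedField 𝕜]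
    [NormedAddCommGroup E] [NormedSpace 𝕜 E] [NormedAddCommGroup F] [NormedSpace 𝕜 F]
    [NormedAddCommGroup G] [NormedSpace 𝕜 G] [NormedAddCommGroup H] [NormedSpace 𝕜 H]
    (B : F →L[𝕜] G →L[𝕜] H) {f : E → F} {g : E → G} {s : Set E} {x : E} {n : ℕ} {a b : ℝ}
    (hs : IsOpen s) (hx : x ∈ s) (hf : ContDiffOn 𝕜 n f s) (hg : ContDiffOn 𝕜 n g s)
    (hB : ‖B‖ ≤ 1) (hfa : ∀ i ≤ n, ‖iteratedFDeriv 𝕜 i f x‖ ≤ a)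
    (hgb : ∀ i ≤ n, ‖iteratedFDeriv 𝕜 i g x‖ ≤ b) :
    ‖iteratedFDeriv 𝕜 n (fun y => B (f y) (g y)) x‖ ≤ 2 ^ n * (a * b) := by
  simp only [← iteratedFDerivWithin_of_isOpen _ hs hx] at hfa hgb ⊢
  exact (B.norm_iteratedFDerivWithin_le_of_bilinear_of_le_one hf hg hs.uniqueDiffOn hx le_rfl
    hB).trans (sum_choose_mul_mul_le n (fun _ => norm_nonneg _) (fun _ => norm_nonneg _) hfa hgb)

theorem norm_iteratedFDeriv_inv {y : ℝ} (n : ℕ) :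
    ‖iteratedFDeriv ℝ n Inv.inv y‖ = n ! / |y| ^ (n + 1) := by
  rw [norm_iteratedFDeriv_eq_norm_iteratedDeriv, iteratedDeriv_eq_iterate, iter_deriv_inv,
    norm_mul, norm_mul, norm_pow, norm_neg, norm_one, one_pow, one_mul, norm_natCast,
    show (-1 - n : ℤ) = -((n + 1 : ℕ) : ℤ) by push_cast; ring, zpow_neg, zpow_natCast, norm_inv,
    norm_pow, Real.norm_eq_abs, div_eq_mul_inv]

theorem norm_iteratedFDeriv_inv_comp_le {E : Type*} [NormedAddCommGroup E] [NormedSpace ℝ E]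
    {h : E → ℝ} {s : Set E} {x : E} {n k : ℕ} {a D : ℝ} (hs : IsOpen s) (hx : x ∈ s)
    (hh : ContDiffOn ℝ n h s) (ha : 0 < a) (ha₁ : a ≤ 1) (hha : ∀ y ∈ s, a < h y) (hD : 1 ≤ D)
    (hhD : ∀ i, 1 ≤ i → i ≤ n → ‖iteratedFDeriv ℝ i h x‖ ≤ D ^ i) (hk : k ≤ n) :
    ‖iteratedFDeriv ℝ k (fun y => (h y)⁻¹) x‖ ≤ n ! * (n ! / a ^ (n + 1)) * D ^ n := by
  have hinv : ContDiffOn ℝ k Inv.inv (Ioi a) :=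
    (contDiffOn_inv ℝ).mono fun y hy => (ha.trans hy).ne'
  have hinvC : ∀ i ≤ k, ‖iteratedFDerivWithin ℝ i Inv.inv (Ioi a) (h x)‖ ≤ n ! / a ^ (n + 1) := by
    intro i hi
    rw [iteratedFDerivWithin_of_isOpen i isOpen_Ioi (hha x hx), norm_iteratedFDeriv_inv]
    have hax : a ≤ |h x| := (hha x hx).le.trans (le_abs_self _)
    calc (i ! : ℝ) / |h x| ^ (i + 1) ≤ n ! / a ^ (i + 1) := by
          gcongr
          exact hi.trans hk
      _ ≤ n ! / a ^ (n + 1) :=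
          div_le_div_of_nonneg_left (by positivity) (by positivity)
            (pow_le_pow_of_le_one ha.le ha₁ (by omega))
  simp only [← iteratedFDerivWithin_of_isOpen _ hs hx] at hhD ⊢
  refine (norm_iteratedFDerivWithin_comp_le hinv (hh.of_le (by exact_mod_cast hk)) le_rfl
    isOpen_Ioi.uniqueDiffOn hs.uniqueDiffOn hha hx hinvC
    fun i hi hik => hhD i hi (hik.trans hk)).trans ?_
  gcongr

theorem norm_iteratedFDeriv_norm_sq_le {E F : Type*} [NormedAddCommGroup E] [NormedSpace ℝ E]
    [NormedAddCommGroup F] [InnerProductSpace ℝ F] {g : E → F} {s : Set E} {x : E} {n : ℕ}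
    {A : ℝ} (hs : IsOpen s) (hx : x ∈ s) (hg : ContDiffOn ℝ n g s)
    (hgA : ∀ i ≤ n, ‖iteratedFDeriv ℝ i g x‖ ≤ A) :
    ‖iteratedFDeriv ℝ n (fun y => ‖g y‖ ^ 2) x‖ ≤ 2 ^ n * A ^ 2 := by
  have h_inner : (fun y => ‖g y‖ ^ 2) = fun y => innerSL ℝ (g y) (g y) := by
    ext y
    rw [innerSL_apply_apply, real_inner_self_eq_norm_sq]
  rw [h_inner, sq A]
  exact (innerSL ℝ).norm_iteratedFDeriv_le_of_bilinear_of_forall_le hs hx hg hg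
    (norm_innerSL_le ℝ) hgA hgA

theorem norm_iteratedFDeriv_inv_norm_sq_le {E F : Type*} [NormedAddCommGroup E]
    [NormedSpace ℝ E] [NormedAddCommGroup F] [InnerProductSpace ℝ F] {g : E → F} {s : Set E}
    {x : E} {N k : ℕ} {A : ℝ} (hs : IsOpen s) (hx : x ∈ s) (hg : ContDiffOn ℝ N g s)
    (hg_half : ∀ y ∈ s, 1 / 2 < ‖g y‖ ^ 2) (hA₁ : 1 ≤ A)
    (hgA : ∀ i ≤ N, ‖iteratedFDeriv ℝ i g x‖ ≤ A) (hk : k ≤ N) :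
    ‖iteratedFDeriv ℝ k (fun y => (‖g y‖ ^ 2)⁻¹) x‖ ≤
      N ! * (N ! / (1 / 2) ^ (N + 1)) * (2 ^ N * A ^ 2) ^ N := by
  have hD : 1 ≤ 2 ^ N * A ^ 2 := one_le_mul_of_one_le_of_one_le (one_le_pow₀ one_le_two)
    (one_le_pow₀ hA₁)
  refine norm_iteratedFDeriv_inv_comp_le hs hx (hg.norm_sq ℝ) (by norm_num) (by norm_num)
    hg_half hD (fun i hi₁ hiN => ?_) hk
  calc ‖iteratedFDeriv ℝ i (fun y => ‖g y‖ ^ 2) x‖ ≤ 2 ^ i * A ^ 2 :=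
        norm_iteratedFDeriv_norm_sq_le hs hx (hg.of_le (by exact_mod_cast hiN))
          fun j hj => hgA j (hj.trans hiN)
    _ ≤ 2 ^ N * A ^ 2 := by gcongr; norm_num
    _ ≤ (2 ^ N * A ^ 2) ^ i := le_self_pow₀ hD (by omega)

section Gradient

variable {E : Type*} [NormedAddCommGroup E] [InnerProductSpace ℝ E] [CompleteSpace E]

theorem gradient_const_smul (c : ℝ) (f : E → ℝ) : gradient (c • f) = c • gradient f := by
  ext1 x
  simp [gradient, fderiv_const_smul_field]

theorem norm_gradient (f : E → ℝ) (x : E) : ‖gradient f x‖ = ‖fderiv ℝ f x‖ :=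
  (toDual ℝ E).symm.norm_map _

theorem norm_iteratedFDeriv_gradient (f : E → ℝ) (x : E) (n : ℕ) :
    ‖iteratedFDeriv ℝ n (gradient f) x‖ = ‖iteratedFDeriv ℝ (n + 1) f x‖ := by
  rw [← norm_iteratedFDeriv_fderiv]
  exact (toDual ℝ E).symm.norm_iteratedFDeriv_comp_left (fderiv ℝ f) x n

theorem ContDiffOn.gradient_of_isOpen {f : E → ℝ} {s : Set E} {n : ℕ}
    (hf : ContDiffOn ℝ (n + 1) f s) (hs : IsOpen s) : ContDiffOn ℝ n (gradient f) s :=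
  (toDual ℝ E).symm.contDiff.comp_contDiffOn (hf.fderiv_of_isOpen hs le_rfl)

noncomputable def nonstationaryField (f : E → ℝ) (v : E) : E → ℝ :=
  fun ζ => fderiv ℝ f ζ v / ‖gradient f ζ‖ ^ 2

theorem nonstationaryField_const_smul (c : ℝ) (f : E → ℝ) (v : E) :
    nonstationaryField (c • f) v = c⁻¹ • nonstationaryField f v := by
  ext1 ζ
  rcases eq_or_ne c 0 with rfl | hc
  · simp [nonstationaryField]
  · simp only [nonstationaryField, gradient_const_smul, fderiv_const_smul_field, Pi.smul_apply,
      FunLike.coe_smul, norm_smul, smul_eq_mul, mul_pow, norm_eq_abs, sq_abs]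
    field_simp

/-- `2 ^ N` comes from the Leibniz rule for `∂_v f · |∇f|⁻²` and `A` bounds `∂_v f`; the rest is
the Faà di Bruno bound `N! · C · D ^ N` for `|∇f|⁻²`, where `C = N! / (1/2) ^ (N + 1)` bounds the
derivatives of `y ↦ 1 / y` on `y > 1/2` and `D = 2 ^ N A²` those of `|∇f|²`. -/
noncomputable def nonstationaryBound (N : ℕ) (A : ℝ) : ℝ :=
  2 ^ N * (A * (N ! * (N ! / (1 / 2) ^ (N + 1)) * (2 ^ N * A ^ 2) ^ N))

theorem norm_iteratedFDeriv_nonstationaryField_le {f : E → ℝ} {s : Set E} {x : E} {N k : ℕ}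
    {A : ℝ} (hs : IsOpen s) (hx : x ∈ s) (hf : ContDiffOn ℝ (N + 1) f s)
    (hgrad : 1 ≤ ‖gradient f x‖) (hA : ∀ i, 1 ≤ i → i ≤ N + 1 → ‖iteratedFDeriv ℝ i f x‖ ≤ A)
    (v : E) (hk : k ≤ N) :
    ‖iteratedFDeriv ℝ k (nonstationaryField f v) x‖ ≤ nonstationaryBound N A * ‖v‖ := by
  set h : E → ℝ := fun y => ‖gradient f y‖ ^ 2
  have hgA : ∀ i ≤ N, ‖iteratedFDeriv ℝ i (gradient f) x‖ ≤ A := fun i hi => by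
    rw [norm_iteratedFDeriv_gradient]
    exact hA (i + 1) (by omega) (by omega)
  have hA₁ : 1 ≤ A := hgrad.trans (by simpa using hgA 0 (zero_le _))
  have hg : ContDiffOn ℝ N (gradient f) s := hf.gradient_of_isOpen hs
  have hh : ContDiffOn ℝ N h s := hg.norm_sq ℝ
  set t := s ∩ h ⁻¹' Ioi (1 / 2)
  have ht : IsOpen t := hh.continuousOn.isOpen_inter_preimage hs isOpen_Ioi
  have hxt : x ∈ t := ⟨hx, (by norm_num : (1 : ℝ) / 2 < 1).trans_le (one_le_pow₀ hgrad)⟩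
  have hinv : ∀ i ≤ N, ‖iteratedFDeriv ℝ i (fun y => (h y)⁻¹) x‖ ≤
      N ! * (N ! / (1 / 2) ^ (N + 1)) * (2 ^ N * A ^ 2) ^ N := fun i hi =>
    norm_iteratedFDeriv_inv_norm_sq_le ht hxt (hg.mono inter_subset_left) (fun y hy => hy.2)
      hA₁ hgA hi
  have hdf : ContDiffOn ℝ N (fderiv ℝ f) s := hf.fderiv_of_isOpen hs le_rfl
  have hu : ∀ i ≤ N, ‖iteratedFDeriv ℝ i (fun y => fderiv ℝ f y v) x‖ ≤ A * ‖v‖ := fun i hi => by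
    refine (norm_iteratedFDeriv_clm_apply_const (hdf.contDiffAt (hs.mem_nhds hx))
      (by exact_mod_cast hi)).trans ?_
    rw [norm_iteratedFDeriv_fderiv, mul_comm]
    gcongr
    exact hA (i + 1) (by omega) (by omega)
  have hG : nonstationaryField f v = fun y => fderiv ℝ f y v * (h y)⁻¹ :=
    funext fun y => div_eq_mul_inv _ _
  have hu_t : ContDiffOn ℝ k (fun y => fderiv ℝ f y v) t :=
    ((hdf.clm_apply contDiffOn_const).mono inter_subset_left).of_le (by exact_mod_cast hk)
  have hinv_t : ContDiffOn ℝ k (fun y => (h y)⁻¹) t :=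
    ((hh.mono inter_subset_left).fun_inv fun y hy => (one_half_pos.trans hy.2).ne').of_le
      (by exact_mod_cast hk)
  rw [hG]
  calc _ ≤ 2 ^ k * (A * ‖v‖ * (N ! * (N ! / (1 / 2) ^ (N + 1)) * (2 ^ N * A ^ 2) ^ N)) :=
        (ContinuousLinearMap.mul ℝ ℝ).norm_iteratedFDeriv_le_of_bilinear_of_forall_le ht hxt hu_t
          hinv_t (ContinuousLinearMap.opNorm_mul_le _ _) (fun i hi => hu i (hi.trans hk))
          (fun i hi => hinv i (hi.trans hk))
    _ ≤ 2 ^ N * (A * ‖v‖ * (N ! * (N ! / (1 / 2) ^ (N + 1)) * (2 ^ N * A ^ 2) ^ N)) := by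
        gcongr
        norm_num
    _ = nonstationaryBound N A * ‖v‖ := by
        rw [nonstationaryBound]
        ring

theorem norm_iteratedFDeriv_nonstationaryField_le_div {f : E → ℝ} {s : Set E} {x : E} {N k : ℕ}
    {A M : ℝ} (hs : IsOpen s) (hx : x ∈ s) (hf : ContDiffOn ℝ (N + 1) f s) (hA₁ : 1 ≤ A)
    (hM : 0 < M) (hgrad : M ≤ ‖gradient f x‖)
    (hA : ∀ i, 2 ≤ i → i ≤ N + 1 → ‖iteratedFDeriv ℝ i f x‖ ≤ A * M) (v : E) (hk : k ≤ N) :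
    ‖iteratedFDeriv ℝ k (nonstationaryField f v) x‖ ≤ nonstationaryBound N A * ‖v‖ / M := by
  set L := ‖gradient f x‖
  have hL : 0 < L := hM.trans_le hgrad
  have hfL : nonstationaryField f v = L⁻¹ • nonstationaryField (L⁻¹ • f) v := by
    rw [nonstationaryField_const_smul, inv_inv, smul_smul, inv_mul_cancel₀ hL.ne', one_smul]
  have hnorm_smul : ∀ i, ‖iteratedFDeriv ℝ i (L⁻¹ • f) x‖ = L⁻¹ * ‖iteratedFDeriv ℝ i f x‖ :=
    fun i => by
      rw [iteratedFDeriv_const_smul_field, Pi.smul_apply, norm_smul, norm_inv, norm_of_nonneg hL.le]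
  have hgrad_one : ‖gradient (L⁻¹ • f) x‖ = 1 := by
    rw [gradient_const_smul, Pi.smul_apply, norm_smul, norm_inv, norm_of_nonneg hL.le,
      inv_mul_cancel₀ hL.ne']
  have hA_one : ∀ i, 1 ≤ i → i ≤ N + 1 → ‖iteratedFDeriv ℝ i (L⁻¹ • f) x‖ ≤ A := by
    intro i hi₁ hiN
    rcases hi₁.eq_or_lt with rfl | hi₂
    · rwa [norm_iteratedFDeriv_one, ← norm_gradient, hgrad_one]
    · calc ‖iteratedFDeriv ℝ i (L⁻¹ • f) x‖ ≤ L⁻¹ * (A * L) := by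
            rw [hnorm_smul]
            gcongr
            exact (hA i hi₂ hiN).trans (by gcongr)
        _ = A := by field_simp
  have hscaled := norm_iteratedFDeriv_nonstationaryField_le hs hx (hf.const_smul L⁻¹)
    hgrad_one.ge hA_one v hk
  rw [hfL, iteratedFDeriv_const_smul_field, Pi.smul_apply, norm_smul, norm_inv,
    norm_of_nonneg hL.le, div_eq_inv_mul]
  exact mul_le_mul (inv_anti₀ hM hgrad) hscaled (norm_nonneg _) (inv_nonneg.mpr hM.le)

end Gradient

theorem stmt14
    (n : ℕ) (N : ℕ) (Cd : ℕ → ℝ) :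
    ∃ C : ℝ, 0 < C ∧
      ∀ (F : Euc n → ℝ) (V : Set (Euc n)) (M : ℝ), 0 < M → IsOpen V →
        {ξ : Euc n | 1/2 ≤ ‖ξ‖ ∧ ‖ξ‖ ≤ 2} ⊆ V →
        ContDiffOn ℝ (⊤ : ℕ∞) F V →
        (∀ ξ : Euc n, 1/2 ≤ ‖ξ‖ → ‖ξ‖ ≤ 2 → M ≤ ‖gradient F ξ‖) →
        (∀ k : ℕ, 2 ≤ k → k ≤ N + 1 → ∀ ξ : Euc n, 1/2 ≤ ‖ξ‖ → ‖ξ‖ ≤ 2 →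
          ‖iteratedFDeriv ℝ k F ξ‖ ≤ Cd k * M) →
        ∀ ξ : Euc n, 1/2 ≤ ‖ξ‖ → ‖ξ‖ ≤ 2 → ∀ ℓ : Fin n, ∀ k : ℕ, k ≤ N →
          ‖iteratedFDeriv ℝ k
              (fun ζ : Euc n =>
                fderiv ℝ F ζ (EuclideanSpace.single ℓ (1 : ℝ)) / ‖gradient F ζ‖ ^ 2) ξ‖
            ≤ C / M := by
  set A : ℝ := 1 + ∑ i ∈ Finset.range (N + 2), |Cd i|
  have hA₁ : 1 ≤ A := le_add_of_nonneg_right (Finset.sum_nonneg fun _ _ => abs_nonneg _)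
  have hCdA : ∀ i ≤ N + 1, Cd i ≤ A := fun i hi =>
    (le_abs_self _).trans <| (Finset.single_le_sum (f := fun i => |Cd i|)
      (fun _ _ => abs_nonneg _) (Finset.mem_range.mpr (by omega))).trans
      (le_add_of_nonneg_left zero_le_one)
  refine ⟨nonstationaryBound N A, by rw [nonstationaryBound]; positivity, ?_⟩
  intro F V M hM hV hAV hF hgrad hder ξ hξ₁ hξ₂ ℓ k hk
  have hbound := norm_iteratedFDeriv_nonstationaryField_le_div hV (hAV ⟨hξ₁, hξ₂⟩)
    (hF.of_le (by exact_mod_cast le_top)) hA₁ hM (hgrad ξ hξ₁ hξ₂)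
    (fun i hi₂ hiN => (hder i hi₂ hiN ξ hξ₁ hξ₂).trans (by gcongr; exact hCdA i hiN))
    (EuclideanSpace.single ℓ 1) hk
  rwa [PiLp.norm_single, norm_one, mul_one] at hbound
end

section
/- Let K : ℝⁿ × ℝⁿ → ℂ be C¹ in the second variable with sup_y ‖∂_y^α K(·, y)‖_{L²_x} ≤ M for all |α| = 1. Let f ∈ L^∞(ℝⁿ) be supported in {|y − ȳ| ≤ r} with ‖f‖_{L^∞} ≤ r^{-n} and ∫ f(y) dy = 0, and define Tf(x) = ∫ f(y) K(x,y) dy. Then ‖Tf‖_{L²} ≤ C_n M r, where C_n depends only on n. -/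
open MeasureTheory Real Set

open scoped ENNReal

/-! Since `∫ f = 0`, `Tf(x) = ∫ f(y) (K(x, y) - K(x, ȳ)) dy`, and the fundamental theorem of
calculus along the segment `[ȳ, y]` bounds the integrand by an integral over `t ∈ (0, 1]` and a sum
over coordinates `ℓ` of `|f(y)| |(y - ȳ)_ℓ| |∂_ℓ K(x, ȳ + t (y - ȳ))|`. Minkowski's integral
inequality moves the `L²_x` norm inside, where it is at most `M` for each `(y, t, ℓ)`; what is left
is `n M ∫ |f(y)| |y - ȳ| dy ≤ n M r^{1-n} vol(B(ȳ, r)) = n vol(B(0, 1)) M r`. -/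

theorem eLpNorm_two_eq_rpow_lintegral {X : Type*} [MeasurableSpace X] {μ : Measure X}
    (g : X → ℝ≥0∞) : eLpNorm g 2 μ = (∫⁻ x, g x ^ (2 : ℝ) ∂μ) ^ (1 / 2 : ℝ) := by
  simp [eLpNorm_eq_lintegral_rpow_enorm_toReal two_ne_zero ENNReal.ofNat_ne_top]

theorem eLpNorm_two_lintegral_le {X Y : Type*} [MeasurableSpace X] [MeasurableSpace Y]
    {μ : Measure X} {ν : Measure Y} [SFinite μ] [SFinite ν]
    {F : X → Y → ℝ≥0∞} (hF : Measurable (Function.uncurry F)) :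
    eLpNorm (fun x ↦ ∫⁻ y, F x y ∂ν) 2 μ ≤ ∫⁻ y, eLpNorm (F · y) 2 μ ∂ν := by
  have hFx : ∀ x, Measurable (F x) := fun x ↦ hF.comp measurable_prodMk_left
  have hFy : ∀ y, Measurable (F · y) := fun y ↦ hF.comp measurable_prodMk_right
  set A : Y → ℝ≥0∞ := fun y ↦ eLpNorm (F · y) 2 μ
  have hA : Measurable A := by
    simp only [A, eLpNorm_two_eq_rpow_lintegral]
    exact ((hF.comp measurable_swap).pow_const _).lintegral_prod_right'.pow_const _
  -- Expand both squares as double integrals and apply Cauchy–Schwarz in `x` to each cross term.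
  have cauchySchwarz : ∀ y z, ∫⁻ x, F x y * F x z ∂μ ≤ A y * A z := fun y z ↦ by
    simpa [A, eLpNorm_two_eq_rpow_lintegral] using ENNReal.lintegral_mul_le_Lp_mul_Lq μ
      Real.HolderConjugate.two_two (hFy y).aemeasurable (hFy z).aemeasurable
  have hsq : ∫⁻ x, (∫⁻ y, F x y ∂ν) ^ (2 : ℝ) ∂μ ≤ (∫⁻ y, A y ∂ν) ^ (2 : ℝ) := calc
    ∫⁻ x, (∫⁻ y, F x y ∂ν) ^ (2 : ℝ) ∂μ = ∫⁻ x, ∫⁻ y, ∫⁻ z, F x y * F x z ∂ν ∂ν ∂μ := by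
        refine lintegral_congr fun x ↦ ?_
        rw [ENNReal.rpow_two, sq, lintegral_lintegral_mul (hFx x).aemeasurable (hFx x).aemeasurable]
    _ = ∫⁻ y, ∫⁻ z, ∫⁻ x, F x y * F x z ∂μ ∂ν ∂ν := by
        rw [lintegral_lintegral_swap (by fun_prop)]
        exact lintegral_congr fun y ↦ lintegral_lintegral_swap (by fun_prop)
    _ ≤ ∫⁻ y, ∫⁻ z, A y * A z ∂ν ∂ν :=
        lintegral_mono fun y ↦ lintegral_mono fun z ↦ cauchySchwarz y z
    _ = (∫⁻ y, A y ∂ν) ^ (2 : ℝ) := by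
        rw [ENNReal.rpow_two, sq, lintegral_lintegral_mul hA.aemeasurable hA.aemeasurable]
  calc eLpNorm (fun x ↦ ∫⁻ y, F x y ∂ν) 2 μ ≤ ((∫⁻ y, A y ∂ν) ^ (2 : ℝ)) ^ (1 / 2 : ℝ) := by
        rw [eLpNorm_two_eq_rpow_lintegral]; gcongr
    _ = ∫⁻ y, A y ∂ν := by rw [← ENNReal.rpow_mul]; norm_num

theorem enorm_sub_le_lintegral_fderiv {E F : Type*} [NormedAddCommGroup E] [NormedSpace ℝ E]
    [NormedAddCommGroup F] [NormedSpace ℝ F] [CompleteSpace F] {g : E → F}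
    (hg : ContDiff ℝ 1 g) (a b : E) :
    ‖g b - g a‖ₑ ≤ ∫⁻ t in Ioc (0 : ℝ) 1, ‖fderiv ℝ g (a + t • (b - a)) (b - a)‖ₑ := by
  have hderiv : ∀ t : ℝ, HasDerivAt (fun s ↦ g (a + s • (b - a)))
      (fderiv ℝ g (a + t • (b - a)) (b - a)) t := fun t ↦
    ((hg.differentiable one_ne_zero _).hasFDerivAt.comp_hasDerivAt t
      (((hasDerivAt_id t).smul_const (b - a)).const_add a)).congr_deriv (by simp)
  have hcont : Continuous fun t : ℝ ↦ fderiv ℝ g (a + t • (b - a)) (b - a) :=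
    (hg.continuous_fderiv one_ne_zero).clm_apply continuous_const |>.comp (by fun_prop)
  have hftc := intervalIntegral.integral_eq_sub_of_hasDerivAt (fun t _ ↦ hderiv t)
    (hcont.intervalIntegrable 0 1)
  simp only [one_smul, add_sub_cancel, zero_smul, add_zero,
    intervalIntegral.integral_of_le zero_le_one] at hftc
  rw [← hftc]
  exact enorm_integral_le_lintegral_enorm _

theorem enorm_apply_le_sum_enorm_mul {ι F : Type*} [Fintype ι] [DecidableEq ι]
    [NormedAddCommGroup F] [NormedSpace ℝ F] (L : EuclideanSpace ℝ ι →L[ℝ] F)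
    (u : EuclideanSpace ℝ ι) :
    ‖L u‖ₑ ≤ ∑ i, ‖u i‖ₑ * ‖L (EuclideanSpace.single i 1)‖ₑ := by
  conv_lhs => rw [← (EuclideanSpace.basisFun ι ℝ).sum_repr u]
  simp only [map_sum, map_smul, EuclideanSpace.basisFun_repr, EuclideanSpace.basisFun_apply]
  refine (enorm_sum_le _ _).trans_eq ?_
  simp [enorm_smul]

theorem measurable_comp_index {Ω ι γ : Type*} [MeasurableSpace Ω] [MeasurableSpace ι]
    [MeasurableSpace γ] [Countable ι] [MeasurableSingletonClass ι] {φ : Ω → ι → γ}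
    (hφ : ∀ i, Measurable (φ · i)) {σ : Ω → ι} (hσ : Measurable σ) :
    Measurable fun ω ↦ φ ω (σ ω) :=
  (measurable_from_prod_countable_left (f := Function.uncurry φ) hφ).comp
    (measurable_id.prodMk hσ)

theorem lintegral_prod_prod_count {α β ι : Type*} [MeasurableSpace α] [MeasurableSpace β]
    [MeasurableSpace ι] [Fintype ι] [MeasurableSingletonClass ι] {μ : Measure α}
    {ν : Measure β} [SFinite μ] [SFinite ν] {H : α × β × ι → ℝ≥0∞} (hH : Measurable H) :
    ∫⁻ ω, H ω ∂μ.prod (ν.prod Measure.count) = ∫⁻ a, ∫⁻ b, ∑ i, H (a, b, i) ∂ν ∂μ := by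
  rw [lintegral_prod _ hH.aemeasurable]
  refine lintegral_congr fun a ↦ ?_
  rw [lintegral_prod (fun p ↦ H (a, p)) (hH.comp measurable_prodMk_left).aemeasurable]
  simp [lintegral_count, tsum_fintype]

theorem integrable_mul_of_support_subset_closedBall {X : Type*} [MetricSpace X] [ProperSpace X]
    [MeasurableSpace X] [OpensMeasurableSpace X] {μ : Measure X} [IsFiniteMeasureOnCompacts μ]
    {f g : X → ℂ} {x₀ : X} {r C : ℝ} (hf : AEStronglyMeasurable f μ) (hfC : ∀ y, ‖f y‖ ≤ C)
    (hsupp : Function.support f ⊆ Metric.closedBall x₀ r) (hg : Continuous g) :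
    Integrable (fun y ↦ f y * g y) μ := by
  have hfOn : IntegrableOn f (Metric.closedBall x₀ r) μ :=
    Measure.integrableOn_of_bounded measure_closedBall_lt_top.ne hf (ae_of_all _ hfC)
  exact (integrableOn_iff_integrable_of_support_subset
    ((Function.support_mul_subset_left _ _).trans hsupp)).1
    (hfOn.mul_continuousOn hg.continuousOn (isCompact_closedBall _ _))

section MeanValue

variable {n : ℕ}

/-- The measure `dy ⊗ dt|_(0,1] ⊗ count` on triples `(y, t, ℓ)`: with the coordinate sum folded
into the integral, Minkowski's inequality is applied only once. -/
noncomputable def mvtMeasure (n : ℕ) : Measure (Euc n × ℝ × Fin n) :=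
  volume.prod ((volume.restrict (Ioc 0 1)).prod Measure.count)

instance : SFinite (mvtMeasure n) := by
  unfold mvtMeasure; infer_instance

/-- `f(y) (y - ȳ)_ℓ ∂_ℓ g(ȳ + t (y - ȳ))` at `ω = (y, t, ℓ)`; integrating it in `t` over `(0, 1]`
and summing over `ℓ` gives `f(y) (g(y) - g(ȳ))`. -/
noncomputable def mvtIntegrand (f g : Euc n → ℂ) (ybar : Euc n) (ω : Euc n × ℝ × Fin n) : ℂ :=
  f ω.1 * ((ω.1 - ybar) ω.2.2 : ℂ) *
    fderiv ℝ g (ybar + ω.2.1 • (ω.1 - ybar)) (EuclideanSpace.single ω.2.2 1)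

theorem measurable_mvtIntegrand {f g : Euc n → ℂ} (hf : Measurable f) (hg : ContDiff ℝ 1 g)
    (ybar : Euc n) : Measurable (mvtIntegrand f g ybar) := by
  refine measurable_comp_index (σ := fun ω ↦ ω.2.2)
    (φ := fun (ω : Euc n × ℝ × Fin n) i ↦ mvtIntegrand f g ybar (ω.1, ω.2.1, i)) (fun i ↦ ?_)
    measurable_snd.snd
  simp only [mvtIntegrand]
  have := hg.continuous_fderiv one_ne_zero
  fun_prop

theorem measurable_mvtIntegrand_param {X : Type*} [TopologicalSpace X] [MeasurableSpace X]
    [OpensMeasurableSpace X] {f : Euc n → ℂ} {K : X → Euc n → ℂ} (hf : Measurable f)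
    (hK : Continuous (Function.uncurry K)) (ybar : Euc n) :
    Measurable fun p : X × (Euc n × ℝ × Fin n) ↦ mvtIntegrand f (K p.1) ybar p.2 := by
  refine measurable_comp_index (σ := fun p ↦ p.2.2.2)
    (φ := fun (p : X × (Euc n × ℝ × Fin n)) i ↦ mvtIntegrand f (K p.1) ybar (p.2.1, p.2.2.1, i))
    (fun i ↦ ?_) measurable_snd.snd.snd
  simp only [mvtIntegrand]
  have hD := (measurable_fderiv_apply_const_with_param ℝ hK (EuclideanSpace.single i 1)).comp
    (f := fun p : X × (Euc n × ℝ × Fin n) ↦ (p.1, ybar + p.2.2.1 • (p.2.1 - ybar))) (by fun_prop)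
  fun_prop

theorem enorm_integral_mul_le_lintegral_mvtIntegrand {f g : Euc n → ℂ} (hf : Integrable f)
    (hfm : Measurable f) (hfg : Integrable fun y ↦ f y * g y) (hf0 : ∫ y, f y = 0)
    (hg : ContDiff ℝ 1 g) (ybar : Euc n) :
    ‖∫ y, f y * g y‖ₑ ≤ ∫⁻ ω, ‖mvtIntegrand f g ybar ω‖ₑ ∂mvtMeasure n := by
  have hcancel : ∫ y, f y * g y = ∫ y, f y * (g y - g ybar) := by
    simp_rw [mul_sub]
    rw [integral_sub hfg (hf.mul_const _), integral_mul_const, hf0, zero_mul, sub_zero]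
  have hpoint : ∀ y, ‖f y * (g y - g ybar)‖ₑ ≤
      ∫⁻ t in Ioc (0 : ℝ) 1, ∑ i, ‖mvtIntegrand f g ybar (y, t, i)‖ₑ := fun y ↦ calc
    ‖f y * (g y - g ybar)‖ₑ
        ≤ ‖f y‖ₑ * ∫⁻ t in Ioc (0 : ℝ) 1, ‖fderiv ℝ g (ybar + t • (y - ybar)) (y - ybar)‖ₑ := by
          rw [enorm_mul]; gcongr; exact enorm_sub_le_lintegral_fderiv hg ybar y
    _ ≤ ‖f y‖ₑ * ∫⁻ t in Ioc (0 : ℝ) 1, ∑ i, ‖(y - ybar) i‖ₑ *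
          ‖fderiv ℝ g (ybar + t • (y - ybar)) (EuclideanSpace.single i 1)‖ₑ := by
          gcongr; exact enorm_apply_le_sum_enorm_mul _ _
    _ = ∫⁻ t in Ioc (0 : ℝ) 1, ∑ i, ‖mvtIntegrand f g ybar (y, t, i)‖ₑ := by
          have hcast : ∀ a : ℝ, ‖(a : ℂ)‖ₑ = ‖a‖ₑ := by simp [← ofReal_norm]
          rw [← lintegral_const_mul' _ _ enorm_ne_top]
          simp only [mvtIntegrand, Finset.mul_sum, enorm_mul, hcast, mul_assoc]
  calc ‖∫ y, f y * g y‖ₑ ≤ ∫⁻ y, ‖f y * (g y - g ybar)‖ₑ := by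
        rw [hcancel]; exact enorm_integral_le_lintegral_enorm _
    _ ≤ ∫⁻ y, ∫⁻ t in Ioc (0 : ℝ) 1, ∑ i, ‖mvtIntegrand f g ybar (y, t, i)‖ₑ :=
        lintegral_mono hpoint
    _ = ∫⁻ ω, ‖mvtIntegrand f g ybar ω‖ₑ ∂mvtMeasure n :=
        (lintegral_prod_prod_count (measurable_mvtIntegrand hfm hg ybar).enorm).symm

theorem eLpNorm_mvtIntegrand_le {X : Type*} [MeasurableSpace X] {μ : Measure X} {p : ℝ≥0∞}
    {K : X → Euc n → ℂ} {M : ℝ≥0∞}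
    (hKM : ∀ ℓ y, eLpNorm (fun x ↦ fderiv ℝ (K x) y (EuclideanSpace.single ℓ 1)) p μ ≤ M)
    (f : Euc n → ℂ) (ybar : Euc n) (ω : Euc n × ℝ × Fin n) :
    eLpNorm (fun x ↦ mvtIntegrand f (K x) ybar ω) p μ ≤
      ‖f ω.1 * ((ω.1 - ybar) ω.2.2 : ℂ)‖ₑ * M := by
  rw [show (fun x ↦ mvtIntegrand f (K x) ybar ω) = (f ω.1 * ((ω.1 - ybar) ω.2.2 : ℂ)) •
    fun x ↦ fderiv ℝ (K x) (ybar + ω.2.1 • (ω.1 - ybar)) (EuclideanSpace.single ω.2.2 1) from rfl,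
    eLpNorm_const_smul]
  gcongr
  exact hKM _ _

theorem lintegral_enorm_mul_coord_le {f : Euc n → ℂ} {ybar : Euc n} {r : ℝ} (hr : 0 < r)
    (hsupp : Function.support f ⊆ Metric.closedBall ybar r)
    (hfb : ∀ y, ‖f y‖ ≤ r ^ (-(n : ℝ))) :
    ∫⁻ ω, ‖f ω.1 * ((ω.1 - ybar) ω.2.2 : ℂ)‖ₑ ∂mvtMeasure n ≤
      ENNReal.ofReal (n * (volume (Metric.ball (0 : Euc n) 1)).toReal * r) := by
  set c := ENNReal.ofReal (r ^ (-(n : ℝ)) * r)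
  have hpoint : ∀ ω : Euc n × ℝ × Fin n, ‖f ω.1 * ((ω.1 - ybar) ω.2.2 : ℂ)‖ₑ ≤
      (Metric.closedBall ybar r).indicator (fun _ ↦ c) ω.1 := by
    rintro ⟨y, t, i⟩
    by_cases hy : y ∈ Metric.closedBall ybar r
    · rw [indicator_of_mem hy, ← ofReal_norm, norm_mul, Complex.norm_real]
      exact ENNReal.ofReal_le_ofReal <| mul_le_mul (hfb y)
        ((PiLp.norm_apply_le _ _).trans (mem_closedBall_iff_norm.1 hy)) (norm_nonneg _)
        (by positivity)
    · simp [Function.notMem_support.1 (fun h ↦ hy (hsupp h)), hy]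
  calc _ ≤ ∫⁻ ω, (Metric.closedBall ybar r).indicator (fun _ ↦ c) ω.1 ∂mvtMeasure n :=
        lintegral_mono hpoint
    _ = n * c * volume (Metric.closedBall ybar r) := by
        have hmeas : Measurable fun ω : Euc n × ℝ × Fin n ↦
            (Metric.closedBall ybar r).indicator (fun _ ↦ c) ω.1 :=
          (measurable_const.indicator measurableSet_closedBall).comp measurable_fst
        rw [mvtMeasure, lintegral_prod_prod_count hmeas]
        simp only [Finset.sum_const, Finset.card_univ, Fintype.card_fin, nsmul_eq_mul,
          lintegral_const, Measure.restrict_apply_univ, Real.volume_Ioc, sub_zero, ENNReal.ofReal_one, mul_one]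
        rw [lintegral_const_mul _ (measurable_const.indicator measurableSet_closedBall),
          lintegral_indicator_const measurableSet_closedBall, mul_assoc]
    _ = ENNReal.ofReal (n * (volume (Metric.ball (0 : Euc n) 1)).toReal * r) := by
        have hpow : r ^ (-(n : ℝ)) * r * r ^ n = r := by
          rw [rpow_neg hr.le, rpow_natCast]; field_simp
        conv_lhs => rw [Measure.addHaar_closedBall _ _ hr.le, finrank_euclideanSpace_fin,
          ← ENNReal.ofReal_toReal
            (measure_ball_lt_top (μ := volume) (x := (0 : Euc n)) (r := 1)).ne,
          ← ENNReal.ofReal_natCast, ← ENNReal.ofReal_mul (by positivity),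
          ← ENNReal.ofReal_mul (by positivity), ← ENNReal.ofReal_mul (by positivity)]
        congr 1
        linear_combination (n * (volume (Metric.ball (0 : Euc n) 1)).toReal) * hpow

end MeanValue

theorem stmt17 (n : ℕ) (hn : 1 ≤ n) :
    ∃ C : ℝ, 0 < C ∧
      ∀ (K : Euc n → Euc n → ℂ) (M : ℝ), 0 ≤ M →
        Continuous (fun p : Euc n × Euc n => K p.1 p.2) →
        (∀ x : Euc n, ContDiff ℝ 1 (K x)) →
        (∀ (ℓ : Fin n) (y : Euc n),
          eLpNorm (fun x : Euc n => fderiv ℝ (K x) y (EuclideanSpace.single ℓ (1 : ℝ)))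
              2 volume ≤ ENNReal.ofReal M) →
        ∀ (f : Euc n → ℂ) (ybar : Euc n) (r : ℝ), 0 < r →
          Measurable f →
          Function.support f ⊆ {y : Euc n | ‖y - ybar‖ ≤ r} →
          (∀ y : Euc n, ‖f y‖ ≤ r ^ (-(n : ℝ))) →
          (∫ y : Euc n, f y) = 0 →
          eLpNorm (fun x : Euc n => ∫ y : Euc n, f y * K x y) 2 volume
            ≤ ENNReal.ofReal (C * M * r) := by
  set V := (volume (Metric.ball (0 : Euc n) 1)).toReal
  have hV : 0 < V := ENNReal.toReal_pos (Metric.measure_ball_pos _ _ one_pos).ne'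
    measure_ball_lt_top.ne
  refine ⟨n * V, by positivity, ?_⟩
  intro K M _ hK hK1 hKM f ybar r hr hfm hsupp hfb hf0
  have hball : Function.support f ⊆ Metric.closedBall ybar r := fun y hy ↦
    mem_closedBall_iff_norm.2 (hsupp hy)
  have hfK : ∀ g : Euc n → ℂ, Continuous g → Integrable fun y ↦ f y * g y := fun _ hg ↦
    integrable_mul_of_support_subset_closedBall hfm.aestronglyMeasurable hfb hball hg
  have hTf : ∀ x, ‖∫ y, f y * K x y‖ₑ ≤ ∫⁻ ω, ‖mvtIntegrand f (K x) ybar ω‖ₑ ∂mvtMeasure n :=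
    fun x ↦ enorm_integral_mul_le_lintegral_mvtIntegrand
      (by simpa using hfK 1 continuous_const) hfm (hfK _ (hK1 x).continuous) hf0 (hK1 x) ybar
  calc eLpNorm (fun x ↦ ∫ y, f y * K x y) 2 volume
      ≤ eLpNorm (fun x ↦ ∫⁻ ω, ‖mvtIntegrand f (K x) ybar ω‖ₑ ∂mvtMeasure n) 2 volume :=
        eLpNorm_mono_enorm fun x ↦ (hTf x).trans_eq (enorm_eq_self _).symm
    _ ≤ ∫⁻ ω, eLpNorm (fun x ↦ ‖mvtIntegrand f (K x) ybar ω‖ₑ) 2 volume ∂mvtMeasure n :=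
        eLpNorm_two_lintegral_le (measurable_mvtIntegrand_param hfm hK ybar).enorm
    _ ≤ ∫⁻ ω, ‖f ω.1 * ((ω.1 - ybar) ω.2.2 : ℂ)‖ₑ * ENNReal.ofReal M ∂mvtMeasure n :=
        lintegral_mono fun ω ↦ (eLpNorm_enorm _).trans_le (eLpNorm_mvtIntegrand_le hKM f ybar ω)
    _ ≤ ENNReal.ofReal (n * V * r) * ENNReal.ofReal M := by
        rw [lintegral_mul_const' _ _ ENNReal.ofReal_ne_top]
        gcongr
        exact lintegral_enorm_mul_coord_le hr hball hfb
    _ = ENNReal.ofReal (n * V * M * r) := by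
        rw [← ENNReal.ofReal_mul (by positivity), mul_right_comm]
end
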